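/- Let (g,h,φ) be a morphism Lie algebra with representation (V,W,ψ), and let (θ,γ,η) ∈ Hom(Λ²g,V) ⊕ Hom(Λ²h,W) ⊕ Hom(g,W) be a 2-cocycle. Define ĝ = g ⊕ V with bracket [(x,v),(x',v')] = ([x,x'], ρ_V(x)v' − ρ_V(x')v + θ(x,x')), ĥ = h ⊕ W with bracket [(h,w),(h',w')] = ([h,h'], ρ_W(h)w' − ρ_W(h')w + γ(h,h')), and φ̂(x,v) = (φ(x), ψ(v) + η(x)). Then ĝ and ĥ are Lie algebras and φ̂ : ĝ → ĥ is a Lie algebra homomorphism, so (ĝ, ĥ, φ̂) is a morphism Lie algebra. -/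

import Mathlib

/-!
Each required identity is, after expanding the brackets componentwise, one of the three cocycle
conditions evaluated at the relevant arguments. In the Leibniz identity on `g ⊕ V` the terms
quadratic in `ρV` cancel because `ρV` is a Lie algebra morphism, and what remains of the
`V`-component is `(δθ)(x, y, z) = 0`. In `φ̂ [a, b] = [φ̂ a, φ̂ b]`, the terms `ψ (ρV x v)` match
`ρW (φ x) (ψ v)` by equivariance of `ψ`, and what remains of the `W`-component is
`(ψ ∘ θ − γ ∘ Λ²φ − δη)(x, y) = 0`.
-/

attribute [local instance] LieRing.ofAssociativeRing

/-- The Chevalley–Eilenberg differential (on plain cochains), for a bracket `br` on `L`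
and an action `ρ` of `L` on `M`:
`(δf)(x₁,…,x_{n+1}) = Σᵢ (-1)^{i+1} ρ(xᵢ) f(…,x̂ᵢ,…) + Σ_{i<j} (-1)^{i+j} f([xᵢ,xⱼ],…,x̂ᵢ,…,x̂ⱼ,…)`. -/
def ceD {L M : Type*} [AddCommGroup M] (br : L → L → L) (ρ : L → M → M)
    {n : ℕ} (f : (Fin n → L) → M) : (Fin (n + 1) → L) → M :=
  fun x =>
    (∑ i : Fin (n + 1), ((-1 : ℤ) ^ (i : ℕ)) • ρ (x i) (f (x ∘ i.succAbove)))
      + ∑ i : Fin (n + 1), ∑ j : Fin (n + 1),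
          if h : (i : ℕ) < (j : ℕ) then
            ((-1 : ℤ) ^ ((i : ℕ) + (j : ℕ))) • f (fun t : Fin n =>
              Fin.cons (α := fun _ => L) (br (x i) (x j))
                (fun s : Fin (n - 1) =>
                  x (j.succAbove (Fin.cast (by have := j.isLt; omega)
                    (Fin.succAbove ⟨(i : ℕ), by have := j.isLt; omega⟩ s))))
                (Fin.cast (by have := j.isLt; omega) t))
          else 0

/-- The bracket on `ĝ = g ⊕ V` determined by a 2-cochain `θ`:
`[(x,v),(x',v')] = ([x,x'], ρV(x)v' − ρV(x')v + θ(x,x'))`. -/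
def extBracket {k g V : Type*} [CommRing k] [LieRing g] [LieAlgebra k g]
    [AddCommGroup V] [Module k V] (ρV : g →ₗ⁅k⁆ Module.End k V)
    (θ : AlternatingMap k g V (Fin 2)) (a b : g × V) : g × V :=
  (⁅a.1, b.1⁆, ρV a.1 b.2 - ρV b.1 a.2 + θ ![a.1, b.1])

/-- The map `φ̂ : ĝ → ĥ`, `φ̂(x,v) = (φ x, ψ v + η x)`. -/
def extHom {k g h V W : Type*} [CommRing k] [LieRing g] [LieAlgebra k g]
    [LieRing h] [LieAlgebra k h] [AddCommGroup V] [Module k V]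
    [AddCommGroup W] [Module k W]
    (φ : g →ₗ⁅k⁆ h) (ψ : V →ₗ[k] W) (η : g →ₗ[k] W) (a : g × V) : h × W :=
  (φ a.1, ψ a.2 + η a.1)


section CochainFormulas

variable {L M : Type*} [AddCommGroup M] (br : L → L → L) (ρ : L → M → M)

theorem ceD_one_apply (f : (Fin 1 → L) → M) (x y : L) :
    ceD br ρ f ![x, y] = ρ x (f ![y]) - ρ y (f ![x]) - f ![br x y] := by
  have h₀ : ![x, y] ∘ Fin.succ = ![y] := rfl
  have h₁ : ![x, y] ∘ Fin.succAbove 1 = ![x] := by ext i; fin_cases i; rfl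
  simp [sub_eq_add_neg, add_assoc, ceD, Fin.fin_one_eq_zero, ← Matrix.vec_single_eq_const, h₀, h₁]

theorem ceD_two_apply (f : (Fin 2 → L) → M) (x y z : L) :
    ceD br ρ f ![x, y, z] = ρ x (f ![y, z]) - ρ y (f ![x, z]) + ρ z (f ![x, y])
      - f ![br x y, z] + f ![br x z, y] - f ![br y z, x] := by
  have h₀ : ![x, y, z] ∘ Fin.succ = ![y, z] := rfl
  have h₁ : ![x, y, z] ∘ Fin.succAbove 1 = ![x, z] := by ext i; fin_cases i <;> rfl
  have h₂ : ![x, y, z] ∘ Fin.succAbove 2 = ![x, y] := by ext i; fin_cases i <;> rfl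
  have h₃ : (2 : Fin 3).succAbove 1 = 1 := rfl
  simp [sub_eq_add_neg, add_assoc, ceD, Fin.sum_univ_three, Fin.fin_one_eq_zero,
    ← Matrix.vec_single_eq_const, h₀, h₁, h₂, h₃]

end CochainFormulas

theorem AlternatingMap.map_fin_two_swap {R M N : Type*} [CommRing R] [AddCommGroup M] [Module R M]
    [AddCommGroup N] [Module R N] (f : AlternatingMap R M N (Fin 2)) (a b : M) :
    f ![a, b] = -f ![b, a] := by
  have h : ![b, a] ∘ Equiv.swap 0 1 = ![a, b] := by ext i; fin_cases i <;> rfl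
  rw [← f.map_swap ![b, a] zero_ne_one, h]

theorem LieHom.map_lie_apply {R L M : Type*} [CommRing R] [LieRing L] [LieAlgebra R L]
    [AddCommGroup M] [Module R M] (ρ : L →ₗ⁅R⁆ Module.End R M) (x y : L) (m : M) :
    ρ ⁅x, y⁆ m = ρ x (ρ y m) - ρ y (ρ x m) := by
  rw [LieHom.map_lie, Ring.lie_def]
  rfl

section Extension

variable {k g V : Type*} [CommRing k] [LieRing g] [LieAlgebra k g] [AddCommGroup V] [Module k V]
  (ρV : g →ₗ⁅k⁆ Module.End k V) (θ : AlternatingMap k g V (Fin 2))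

theorem extBracket_self (a : g × V) : extBracket ρV θ a a = 0 := by
  have hθ : θ ![a.1, a.1] = 0 := θ.map_eq_zero_of_eq _ (i := 0) (j := 1) rfl zero_ne_one
  simp only [extBracket, lie_self, sub_self, zero_add, hθ]
  rfl

theorem extBracket_leibniz (hθ : ceD (fun a b : g => ⁅a, b⁆) (fun x u => ρV x u) (⇑θ) = 0)
    (a b c : g × V) :
    extBracket ρV θ a (extBracket ρV θ b c) =
      extBracket ρV θ (extBracket ρV θ a b) c + extBracket ρV θ b (extBracket ρV θ a c) := by
  obtain ⟨x, u⟩ := a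
  obtain ⟨y, v⟩ := b
  obtain ⟨z, w⟩ := c
  have cocycle := congrFun hθ ![x, y, z]
  rw [ceD_two_apply, Pi.zero_apply] at cocycle
  simp only [extBracket, Prod.mk_add_mk, Prod.mk.injEq]
  refine ⟨leibniz_lie x y z, sub_eq_zero.mp (Eq.trans ?_ cocycle)⟩
  simp only [map_sub, map_add, LieHom.map_lie_apply, θ.map_fin_two_swap x ⁅y, z⁆,
    θ.map_fin_two_swap y ⁅x, z⁆]
  abel

theorem extHom_extBracket {h W : Type*} [LieRing h] [LieAlgebra k h] [AddCommGroup W] [Module k W]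
    (φ : g →ₗ⁅k⁆ h) (ρW : h →ₗ⁅k⁆ Module.End k W) (ψ : V →ₗ[k] W)
    (hψ : ∀ (x : g) (v : V), ψ (ρV x v) = ρW (φ x) (ψ v))
    (γ : AlternatingMap k h W (Fin 2)) (η : g →ₗ[k] W)
    (hη : (fun y : Fin 2 → g =>
        ψ (θ y) - γ (fun i => φ (y i))
          - ceD (fun a b : g => ⁅a, b⁆) (fun x w => ρW (φ x) w)
              (fun t : Fin 1 → g => η (t 0)) y) = 0)
    (a b : g × V) :
    extHom φ ψ η (extBracket ρV θ a b) = extBracket ρW γ (extHom φ ψ η a) (extHom φ ψ η b) := by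
  obtain ⟨x, u⟩ := a
  obtain ⟨y, v⟩ := b
  have cocycle := congrFun hη ![x, y]
  have hφ : (fun i => φ (![x, y] i)) = ![φ x, φ y] := by ext i; fin_cases i <;> rfl
  simp only [ceD_one_apply, hφ, Matrix.cons_val_zero, Pi.zero_apply] at cocycle
  simp only [extHom, extBracket, Prod.mk.injEq]
  refine ⟨φ.map_lie x y, sub_eq_zero.mp (Eq.trans ?_ cocycle)⟩
  simp only [map_sub, map_add, hψ]
  abel

end Extension

/-- Let `(g,h,φ)` be a morphism Lie algebra with representation `(V,W,ψ)`
and let `(θ,γ,η)` be a 2-cocycle of the morphism Lie algebra complex.  Then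
`ĝ = g ⊕ V` and `ĥ = h ⊕ W` with the brackets
`[(x,v),(x',v')] = ([x,x'], ρV(x)v' − ρV(x')v + θ(x,x'))` (resp. with `ρW, γ`)
are Lie algebras, and `φ̂(x,v) = (φ x, ψ v + η x)` is a Lie algebra homomorphism, so
`(ĝ, ĥ, φ̂)` is a morphism Lie algebra. -/
theorem statement14 {k g h V W : Type*} [CommRing k]
    [LieRing g] [LieAlgebra k g] [LieRing h] [LieAlgebra k h]
    [AddCommGroup V] [Module k V] [AddCommGroup W] [Module k W]
    (φ : g →ₗ⁅k⁆ h) (ρV : g →ₗ⁅k⁆ Module.End k V) (ρW : h →ₗ⁅k⁆ Module.End k W)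
    (ψ : V →ₗ[k] W)
    (hψ : ∀ (x : g) (v : V), ψ (ρV x v) = ρW (φ x) (ψ v))
    (θ : AlternatingMap k g V (Fin 2)) (γ : AlternatingMap k h W (Fin 2))
    (η : g →ₗ[k] W)
    -- the 2-cocycle conditions δ'θ = 0, δ''γ = 0, ψ∘θ − γ∘Λ²φ − δ'''η = 0 :
    (hθ : ceD (fun a b : g => ⁅a, b⁆) (fun x u => ρV x u) (⇑θ) = 0)
    (hγ : ceD (fun a b : h => ⁅a, b⁆) (fun z w => ρW z w) (⇑γ) = 0)
    (hη : (fun y : Fin 2 → g =>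
        ψ (θ y) - γ (fun i => φ (y i))
          - ceD (fun a b : g => ⁅a, b⁆) (fun x w => ρW (φ x) w)
              (fun t : Fin 1 → g => η (t 0)) y) = 0) :
    -- ĝ is a Lie algebra:
    (∀ a : g × V, extBracket ρV θ a a = 0) ∧
    (∀ a b c : g × V,
      extBracket ρV θ a (extBracket ρV θ b c) =
        extBracket ρV θ (extBracket ρV θ a b) c +
          extBracket ρV θ b (extBracket ρV θ a c)) ∧
    -- ĥ is a Lie algebra:
    (∀ a : h × W, extBracket ρW γ a a = 0) ∧
    (∀ a b c : h × W,
      extBracket ρW γ a (extBracket ρW γ b c) =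
        extBracket ρW γ (extBracket ρW γ a b) c +
          extBracket ρW γ b (extBracket ρW γ a c)) ∧
    -- φ̂ is a homomorphism of Lie algebras:
    (∀ a b : g × V,
      extHom φ ψ η (extBracket ρV θ a b) =
        extBracket ρW γ (extHom φ ψ η a) (extHom φ ψ η b)) := by
  exact ⟨extBracket_self ρV θ, extBracket_leibniz ρV θ hθ, extBracket_self ρW γ,
    extBracket_leibniz ρW γ hγ, extHom_extBracket ρV θ φ ρW ψ hψ γ η hη⟩
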